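/- Let N ≥ 1 and T ∈ SYT^{(N,N)}. For every x ∈ 𝔛_{2N}, Δ(x_1,…,x_{2N})^{−1/2} · P_{T^t}(x_1,…,x_{2N}) = ∏_{1≤i<j≤2N} (x_j − x_i)^{θ_T(i,j)/2}, where θ_T(i,j) = +1 if the entries i and j lie in the same row of T, and θ_T(i,j) = −1 otherwise. -/
import Mathlib


open scoped Classical
open MvPolynomial

noncomputable section

/-- The cells of the Young diagram of shape `(N, N)`: two rows of length `N`. -/
def cellsNN (N : ℕ) : Finset (ℕ × ℕ) := (Finset.range 2) ×ˢ (Finset.range N)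

/-- Normalization off the diagram. -/
def ZeroOff (cells : Finset (ℕ × ℕ)) (F : ℕ × ℕ → ℕ) : Prop :=
  ∀ c, c ∉ cells → F c = 0

/-- The set `SYT^{(N,N)}` of standard Young tableaux of shape `(N, N)`. -/
def SYTsetNN (N : ℕ) : Set (ℕ × ℕ → ℕ) :=
  {T | Set.BijOn T ↑(cellsNN N) (Set.Icc 1 (2 * N)) ∧
    (∀ c ∈ cellsNN N, ∀ c' ∈ cellsNN N, c.1 = c'.1 → c.2 < c'.2 → T c < T c') ∧
    (∀ c ∈ cellsNN N, ∀ c' ∈ cellsNN N, c.2 = c'.2 → c.1 < c'.1 → T c < T c') ∧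
    ZeroOff (cellsNN N) T}

/-- The Specht polynomial `P_{T^t}` of the transpose of `T ∈ SYT^{(N,N)}`. -/
def spechtTransNN (N : ℕ) (T : ℕ × ℕ → ℕ) : MvPolynomial ℕ ℝ :=
  ∏ p ∈ ((cellsNN N) ×ˢ (cellsNN N)).filter (fun p => p.1.1 = p.2.1 ∧ p.2.2 < p.1.2),
    (X (T p.1) - X (T p.2))

/-- Evaluation of a polynomial in the 1-based variables `x_1, …, x_m` at `x : Fin m → ℝ`. -/
def evalAt (m : ℕ) (x : Fin m → ℝ) : MvPolynomial ℕ ℝ → ℝ :=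
  MvPolynomial.eval fun k => if h : 1 ≤ k ∧ k ≤ m then x ⟨k - 1, by omega⟩ else 0

/-- The Vandermonde product `Δ(x_1, …, x_m) = ∏_{i<j} (x_j - x_i)`. -/
def vandProd (m : ℕ) (x : Fin m → ℝ) : ℝ :=
  ∏ p ∈ Finset.univ.filter (fun p : Fin m × Fin m => p.1 < p.2), (x p.2 - x p.1)

/-- The entries `a` and `b` lie in the same row of the tableau `T` of shape `(N,N)`. -/
def SameRow (N : ℕ) (T : ℕ × ℕ → ℕ) (a b : ℕ) : Prop :=
  ∃ i j1 j2 : ℕ, (i, j1) ∈ cellsNN N ∧ (i, j2) ∈ cellsNN N ∧ T (i, j1) = a ∧ T (i, j2) = b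

/-- Square root of a product of nonnegatives. -/
lemma sqrt_finset_prod {ι : Type*} (s : Finset ι) (f : ι → ℝ) (h : ∀ i ∈ s, 0 ≤ f i) :
    Real.sqrt (∏ i ∈ s, f i) = ∏ i ∈ s, Real.sqrt (f i) := by
  induction s using Finset.cons_induction with
  | empty => simp
  | cons a s ha ih =>
    rw [Finset.prod_cons, Finset.prod_cons,
      Real.sqrt_mul (h a (Finset.mem_cons_self a s)),
      ih (fun i hi => h i (Finset.mem_cons_of_mem hi))]

/-- Evaluation of the Specht polynomial as a product over pairs of entries in the same row. -/
lemma specht_eval (N : ℕ) (T : ℕ × ℕ → ℕ) (hT : T ∈ SYTsetNN N)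
    (x : Fin (2 * N) → ℝ) :
    evalAt (2 * N) x (spechtTransNN N T)
      = ∏ p ∈ Finset.univ.filter (fun p : Fin (2 * N) × Fin (2 * N) =>
          p.1 < p.2 ∧ SameRow N T ((p.1 : ℕ) + 1) ((p.2 : ℕ) + 1)),
          (x p.2 - x p.1) := by
  obtain ⟨⟨hmaps, hinj, hsurj⟩, hrow, hcol, hzero⟩ := hT
  have hmem : ∀ c ∈ cellsNN N, 1 ≤ T c ∧ T c ≤ 2 * N := by
    intro c hc
    have := hmaps hc
    simpa [Set.mem_Icc] using this
  rw [evalAt, spechtTransNN, map_prod]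
  refine Finset.prod_bij (fun p hp => (⟨T p.2 - 1, by
      have := hmem p.2 (by
        simp only [Finset.mem_filter, Finset.mem_product] at hp; exact hp.1.2)
      omega⟩, ⟨T p.1 - 1, by
      have := hmem p.1 (by
        simp only [Finset.mem_filter, Finset.mem_product] at hp; exact hp.1.1)
      omega⟩)) ?_ ?_ ?_ ?_
  · -- maps into target
    intro p hp
    simp only [Finset.mem_filter, Finset.mem_product] at hp
    obtain ⟨⟨hp1, hp2⟩, hr, hc⟩ := hp
    have h1 := hmem p.1 hp1
    have h2 := hmem p.2 hp2
    have hlt : T p.2 < T p.1 := hrow p.2 hp2 p.1 hp1 hr.symm hc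
    simp only [Finset.mem_filter, Finset.mem_univ, true_and]
    constructor
    · exact Fin.mk_lt_mk.mpr (by omega)
    · refine ⟨p.1.1, p.2.2, p.1.2, ?_, ?_, ?_, ?_⟩
      · have : ((p.1.1, p.2.2) : ℕ × ℕ) = p.2 := by
          rw [hr]
        rw [this]; exact hp2
      · have : ((p.1.1, p.1.2) : ℕ × ℕ) = p.1 := rfl
        rw [this]; exact hp1
      · have : ((p.1.1, p.2.2) : ℕ × ℕ) = p.2 := by rw [hr]
        rw [this]; omega
      · have : ((p.1.1, p.1.2) : ℕ × ℕ) = p.1 := rfl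
        rw [this]; omega
  · -- injective
    intro p hp p' hp' heq
    simp only [Finset.mem_filter, Finset.mem_product] at hp hp'
    have h1 := hmem p.1 hp.1.1
    have h2 := hmem p.2 hp.1.2
    have h1' := hmem p'.1 hp'.1.1
    have h2' := hmem p'.2 hp'.1.2
    have e1 : T p.2 - 1 = T p'.2 - 1 := congrArg (fun q => (q.1 : ℕ)) heq
    have e2 : T p.1 - 1 = T p'.1 - 1 := congrArg (fun q => (q.2 : ℕ)) heq
    have : T p.2 = T p'.2 := by omega
    have h22 : p.2 = p'.2 := hinj hp.1.2 hp'.1.2 this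
    have : T p.1 = T p'.1 := by omega
    have h11 : p.1 = p'.1 := hinj hp.1.1 hp'.1.1 this
    exact Prod.ext h11 h22
  · -- surjective
    intro q hq
    simp only [Finset.mem_filter, Finset.mem_univ, true_and] at hq
    obtain ⟨hlt, r, j1, j2, hc1, hc2, e1, e2⟩ := hq
    have hltv : T (r, j1) < T (r, j2) := by
      rw [e1, e2]; exact Nat.add_lt_add_right hlt 1
    have hj : j1 < j2 := by
      rcases lt_trichotomy j1 j2 with h | h | h
      · exact h
      · exfalso; rw [h] at hltv; exact lt_irrefl _ hltv
      · exfalso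
        exact absurd (hrow (r, j2) hc2 (r, j1) hc1 rfl h) (by omega)
    refine ⟨((r, j2), (r, j1)), ?_, ?_⟩
    · simp only [Finset.mem_filter, Finset.mem_product]
      exact ⟨⟨hc2, hc1⟩, trivial, hj⟩
    · have h1 := hmem _ hc1
      have h2 := hmem _ hc2
      refine Prod.ext (Fin.ext ?_) (Fin.ext ?_) <;> simp only
      · rw [e1]; omega
      · rw [e2]; omega
  · -- values agree
    intro p hp
    simp only [Finset.mem_filter, Finset.mem_product] at hp
    have h1 := hmem p.1 hp.1.1
    have h2 := hmem p.2 hp.1.2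
    rw [map_sub, eval_X, eval_X]
    rw [dif_pos h1, dif_pos h2]

/-- For `T ∈ SYT^{(N,N)}` and `x` in the chamber,
`Δ(x)^{-1/2} P_{T^t}(x) = ∏_{1≤i<j≤2N} (x_j - x_i)^{θ_T(i,j)/2}` where `θ_T(i,j) = +1`
if the entries `i` and `j` lie in the same row of `T` and `-1` otherwise. -/
theorem conformal_block_product_formula
    (N : ℕ) (hN : 0 < N) (T : ℕ × ℕ → ℕ) (hT : T ∈ SYTsetNN N)
    (x : Fin (2 * N) → ℝ) (hx : StrictMono x) :
    evalAt (2 * N) x (spechtTransNN N T) / Real.sqrt (vandProd (2 * N) x)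
      = ∏ p ∈ Finset.univ.filter (fun p : Fin (2 * N) × Fin (2 * N) => p.1 < p.2),
          (x p.2 - x p.1) ^
            (if SameRow N T ((p.1 : ℕ) + 1) ((p.2 : ℕ) + 1)
              then ((1 : ℝ) / 2) else (-(1 : ℝ) / 2)) := by
  set U : Finset (Fin (2 * N) × Fin (2 * N)) :=
    Finset.univ.filter (fun p => p.1 < p.2) with hU
  set P : Fin (2 * N) × Fin (2 * N) → Prop :=
    fun p => SameRow N T ((p.1 : ℕ) + 1) ((p.2 : ℕ) + 1) with hP
  have hpos : ∀ p ∈ U, 0 < x p.2 - x p.1 := by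
    intro p hp
    simp only [hU, Finset.mem_filter, Finset.mem_univ, true_and] at hp
    exact sub_pos.mpr (hx hp)
  -- rewrite RHS
  have hRHS : ∀ p ∈ U, (x p.2 - x p.1) ^
      (if P p then ((1 : ℝ) / 2) else (-(1 : ℝ) / 2))
      = if P p then Real.sqrt (x p.2 - x p.1) else (Real.sqrt (x p.2 - x p.1))⁻¹ := by
    intro p hp
    have h := (hpos p hp).le
    split_ifs with hpp
    · rw [Real.sqrt_eq_rpow]
    · rw [show (-(1 : ℝ) / 2) = -(1 / 2) by ring, Real.rpow_neg h, Real.sqrt_eq_rpow]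
  rw [Finset.prod_congr rfl hRHS, Finset.prod_ite]
  -- rewrite LHS
  have hfilter : Finset.univ.filter (fun p : Fin (2 * N) × Fin (2 * N) =>
      p.1 < p.2 ∧ P p) = U.filter P := by
    ext p
    simp [hU, and_assoc]
  rw [specht_eval N T hT x, hfilter]
  rw [vandProd, ← hU, sqrt_finset_prod U _ (fun p hp => (hpos p hp).le),
    ← Finset.prod_filter_mul_prod_filter_not U P (fun p => Real.sqrt (x p.2 - x p.1))]
  have hs : ∀ p ∈ U.filter P, x p.2 - x p.1
      = Real.sqrt (x p.2 - x p.1) * Real.sqrt (x p.2 - x p.1) := by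
    intro p hp
    exact (Real.mul_self_sqrt (hpos p (Finset.mem_of_mem_filter p hp)).le).symm
  rw [Finset.prod_congr rfl hs, Finset.prod_mul_distrib]
  have hne : ∀ (s : Finset (Fin (2 * N) × Fin (2 * N))), s ⊆ U →
      ∏ p ∈ s, Real.sqrt (x p.2 - x p.1) ≠ 0 := by
    intro s hsub
    rw [Finset.prod_ne_zero_iff]
    intro p hp
    exact (Real.sqrt_pos.mpr (hpos p (hsub hp))).ne'
  have h1 := hne (U.filter P) (Finset.filter_subset _ _)
  have h2 := hne (U.filter (fun p => ¬ P p)) (Finset.filter_subset _ _)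
  rw [Finset.prod_inv_distrib]
  field_simp
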